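/- The Myerson interaction index satisfies graph null player: if i is a graph null player in (N, v, Γ), then MI^{v,Γ}(S ∪ {i}) = 0 for all S ⊆ N∖{i} (including S = ∅, assuming v({i}) = 0). -/

import Mathlib

/-!
Dividends vanish on every coalition containing a null player, and the Shapley interaction
index is a weighted sum of dividends, so it suffices that `i` is a null player of the
graph-restricted game. Adding `i` to `S` merges the components of `S` reachable from `i` into
one component `C`. Two players of `C` lying in different components of `S` have `i` as an
intermediary, so one of them is null; hence all non-null players of `C` sit in one component of
`S`, the other merged components consist of null players, and `v C` is the sum of `v` over the
merged components.
-/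

open Finset

noncomputable section
open scoped Classical

namespace TUGame

variable {ι : Type*} [Fintype ι] [DecidableEq ι]

/-- Harsanyi dividend of coalition `T` in game `v`. -/
def dividend (v : Finset ι → ℝ) (T : Finset ι) : ℝ :=
  ∑ R ∈ T.powerset, (-1 : ℝ) ^ (T.card - R.card) * v R

/-- Unanimity game of coalition `T`. -/
def unanimity (T S : Finset ι) : ℝ := if T ⊆ S then 1 else 0

/-- Shapley value of player `i` in game `v`. -/
def shapley (v : Finset ι → ℝ) (i : ι) : ℝ :=
  ∑ S ∈ Finset.univ.powerset.filter (fun S => i ∈ S),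
    (((S.card - 1).factorial * (Fintype.card ι - S.card).factorial : ℕ) : ℝ) /
      (((Fintype.card ι).factorial : ℕ) : ℝ) * (v S - v (S.erase i))

/-- Shapley interaction index, defined via discrete derivatives. -/
def SIderiv (v : Finset ι → ℝ) (S : Finset ι) : ℝ :=
  ∑ T ∈ (Finset.univ \ S).powerset,
    (((Fintype.card ι - T.card - S.card).factorial * T.card.factorial : ℕ) : ℝ) /
      (((Fintype.card ι - S.card + 1).factorial : ℕ) : ℝ) *
    ∑ L ∈ S.powerset, (-1 : ℝ) ^ (S.card - L.card) * v (T ∪ L)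

/-- Shapley interaction index, expressed via Harsanyi dividends. -/
def SIdiv (v : Finset ι → ℝ) (S : Finset ι) : ℝ :=
  ∑ T ∈ Finset.univ.powerset.filter (fun T => S ⊆ T),
    dividend v T / ((T.card - S.card + 1 : ℕ) : ℝ)

/-- The subgraph of `G` induced by the coalition `S` (as a graph on the same vertex set). -/
def restrict (G : SimpleGraph ι) (S : Finset ι) : SimpleGraph ι where
  Adj i j := G.Adj i j ∧ i ∈ S ∧ j ∈ S
  symm := ⟨fun i j h => ⟨G.symm.symm _ _ h.1, h.2.2, h.2.1⟩⟩
  loopless := ⟨fun i h => G.loopless.irrefl i h.1⟩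

/-- Connected component of `i` in the subgraph induced by `S`. -/
def comp (G : SimpleGraph ι) (S : Finset ι) (i : ι) : Finset ι :=
  S.filter fun j => (restrict G S).Reachable i j

/-- Connected component of `i` in `G`. -/
def component (G : SimpleGraph ι) (i : ι) : Finset ι := comp G Finset.univ i

/-- Myerson graph-restricted game: sum of `v` over the connected components
of the subgraph induced by `S`. -/
def restrictedGame (G : SimpleGraph ι) (v : Finset ι → ℝ) (S : Finset ι) : ℝ :=
  ∑ C ∈ S.image (comp G S), v C

/-- Myerson interaction index. -/
def MI (G : SimpleGraph ι) (v : Finset ι → ℝ) (S : Finset ι) : ℝ :=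
  SIdiv (restrictedGame G v) S

/-- The subgraph induced by `S` is connected. -/
def ConnectedOn (G : SimpleGraph ι) (S : Finset ι) : Prop :=
  ∀ i ∈ S, ∀ j ∈ S, (restrict G S).Reachable i j

/-- `R` is a minimal `T`-connecting set of nodes in `G`. -/
def MinimalConnecting (G : SimpleGraph ι) (T R : Finset ι) : Prop :=
  T ⊆ R ∧ ConnectedOn G R ∧ ∀ R' ⊂ R, ¬ (T ⊆ R' ∧ ConnectedOn G R')

/-- `i` is an intermediary of `T` in `G`. -/
def Intermediary (G : SimpleGraph ι) (T : Finset ι) (i : ι) : Prop :=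
  ∃ R, MinimalConnecting G T R ∧ i ∈ R ∧ i ∉ T

/-- `i` is an essential intermediary of `T` in `G`. -/
def EssentialIntermediary (G : SimpleGraph ι) (T : Finset ι) (i : ι) : Prop :=
  i ∉ T ∧ ∀ R, MinimalConnecting G T R → i ∈ R

/-- `i` is a null player in game `v`. -/
def NullPlayer (v : Finset ι → ℝ) (i : ι) : Prop :=
  ∀ S : Finset ι, i ∉ S → v (insert i S) = v S

/-- `i` is a graph null player in the communication situation `(N, v, G)`. -/
def GraphNull (G : SimpleGraph ι) (v : Finset ι → ℝ) (i : ι) : Prop :=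
  NullPlayer v i ∧
    ∀ j k : ι, j ≠ k → j ≠ i → k ≠ i → Intermediary G {j, k} i →
      NullPlayer v j ∨ NullPlayer v k

/-- `P` is a veto partnership in game `v`. -/
def VetoPartnership (v : Finset ι → ℝ) (P : Finset ι) : Prop :=
  P.Nonempty ∧ ∀ T : Finset ι, T ⊆ Finset.univ \ P →
    v T = 0 ∧ ∀ S ⊂ P, v (T ∪ S) = 0

/-- `GP` is a veto graph partnership in `(N, v, G)`. -/
def VetoGraphPartnership (G : SimpleGraph ι) (v : Finset ι → ℝ) (GP : Finset ι) : Prop :=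
  GP.Nonempty ∧ ∃ P, VetoPartnership v P ∧
    ∀ i ∈ GP, i ∈ P ∨ EssentialIntermediary G P i

/-- Cutnodes of `S`: nodes of `S` whose removal disconnects the induced subgraph on `S`. -/
def cutnodes (G : SimpleGraph ι) (S : Finset ι) : Finset ι :=
  S.filter fun i => ¬ ConnectedOn G (S.erase i)

end TUGame

open TUGame

namespace TUGame

variable {ι : Type*}

lemma restrict_mono (G : SimpleGraph ι) {S T : Finset ι} (h : S ⊆ T) :
    restrict G S ≤ restrict G T :=
  fun _ _ hab => ⟨hab.1, h hab.2.1, h hab.2.2⟩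

variable [DecidableEq ι]

section NullPlayers

variable {v : Finset ι → ℝ}

lemma apply_union_of_forall_nullPlayer {B : Finset ι} (hB : ∀ j ∈ B, NullPlayer v j)
    (T : Finset ι) : v (B ∪ T) = v T := by
  induction B using Finset.induction_on with
  | empty => rw [empty_union]
  | insert b B _ ih =>
    have ih := ih fun j hj => hB j (mem_insert_of_mem hj)
    rw [insert_union]
    by_cases hb : b ∈ B ∪ T
    · rw [insert_eq_of_mem hb, ih]
    · rw [hB b (mem_insert_self b B) _ hb, ih]

lemma apply_eq_zero_of_forall_nullPlayer (hv : v ∅ = 0) {D : Finset ι}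
    (hD : ∀ j ∈ D, NullPlayer v j) : v D = 0 := by
  rw [← union_empty D, apply_union_of_forall_nullPlayer hD, hv]

lemma NullPlayer.dividend_eq_zero {i : ι} (hi : NullPlayer v i) {T : Finset ι} (hiT : i ∈ T) :
    dividend v T = 0 := by
  rw [dividend, ← insert_erase hiT, sum_powerset_insert (notMem_erase i T), ← sum_add_distrib]
  refine sum_eq_zero fun R hR => ?_
  have hiR : i ∉ R := fun h => notMem_erase i T (mem_powerset.mp hR h)
  have hRT : R.card ≤ (T.erase i).card := card_le_card (mem_powerset.mp hR)
  -- the terms for `R` and `insert i R` carry the same value of `v` and opposite signs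
  rw [hi R hiR, card_insert_of_notMem hiR, card_insert_of_notMem (notMem_erase i T),
    Nat.succ_sub_succ, Nat.succ_sub hRT, pow_succ]
  ring

lemma NullPlayer.SIdiv_eq_zero [Fintype ι] {i : ι} (hi : NullPlayer v i) {S : Finset ι}
    (hiS : i ∈ S) : SIdiv v S = 0 :=
  sum_eq_zero fun T hT => by rw [hi.dividend_eq_zero ((mem_filter.mp hT).2 hiS), zero_div]

end NullPlayers

section Graphs

variable {G : SimpleGraph ι}

lemma reachable_restrict_of_reachable_restrict_insert {S : Finset ι} {i j k : ι}
    (hij : ¬ (restrict G (insert i S)).Reachable i j)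
    (hjk : (restrict G (insert i S)).Reachable j k) : (restrict G S).Reachable j k := by
  obtain ⟨p⟩ := hjk
  induction p with
  | nil => rfl
  | @cons j x k hjx _ ih =>
    have hj : j ≠ i := by rintro rfl; exact hij .rfl
    have hx : x ≠ i := by rintro rfl; exact hij hjx.reachable.symm
    have hjx' : (restrict G S).Adj j x :=
      ⟨hjx.1, (mem_insert.mp hjx.2.1).resolve_left hj, (mem_insert.mp hjx.2.2).resolve_left hx⟩
    exact hjx'.reachable.trans (ih fun h => hij (h.trans hjx.reachable.symm))

lemma exists_minimalConnecting {T C : Finset ι} (hTC : T ⊆ C) (hC : ConnectedOn G C) :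
    ∃ R ⊆ C, MinimalConnecting G T R := by
  obtain ⟨R, hR, hmin⟩ := Finset.exists_minimal (s := C.powerset.filter
    fun R => T ⊆ R ∧ ConnectedOn G R) ⟨C, mem_filter.mpr ⟨mem_powerset_self C, hTC, hC⟩⟩
  obtain ⟨hRC, hTR, hRconn⟩ := mem_filter.mp hR
  refine ⟨R, mem_powerset.mp hRC, hTR, hRconn, fun R' hR' hR'T => ?_⟩
  have hR'mem : R' ∈ C.powerset.filter fun R => T ⊆ R ∧ ConnectedOn G R :=
    mem_filter.mpr ⟨mem_powerset.mpr (hR'.subset.trans (mem_powerset.mp hRC)), hR'T⟩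
  exact hR'.not_subset (hmin hR'mem hR'.subset)

lemma intermediary_of_not_reachable_erase {C : Finset ι} {i j k : ι} (hC : ConnectedOn G C)
    (hj : j ∈ C) (hk : k ∈ C) (hji : j ≠ i) (hki : k ≠ i)
    (hjk : ¬ (restrict G (C.erase i)).Reachable j k) : Intermediary G {j, k} i := by
  obtain ⟨R, hRC, hR⟩ := exists_minimalConnecting (insert_subset hj (singleton_subset_iff.mpr hk)) hC
  refine ⟨R, hR, ?_, by simp [hji.symm, hki.symm]⟩
  by_contra hiR
  have hRC' : R ⊆ C.erase i := fun x hx => mem_erase.mpr ⟨fun h => hiR (h ▸ hx), hRC hx⟩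
  exact hjk ((hR.2.1 j (hR.1 (by simp)) k (hR.1 (by simp))).mono (restrict_mono G hRC'))

end Graphs

section Components

variable [Fintype ι] {G : SimpleGraph ι} {S : Finset ι}

@[simp]
lemma mem_comp {j k : ι} : k ∈ comp G S j ↔ k ∈ S ∧ (restrict G S).Reachable j k := by
  simp [comp]

lemma mem_comp_self {j : ι} (hj : j ∈ S) : j ∈ comp G S j :=
  mem_comp.mpr ⟨hj, .rfl⟩

lemma comp_subset (j : ι) : comp G S j ⊆ S :=
  filter_subset _ _

lemma comp_eq_of_mem {j k : ι} (hk : k ∈ comp G S j) : comp G S k = comp G S j := by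
  have hjk := (mem_comp.mp hk).2
  ext x
  simp only [mem_comp]
  exact and_congr_right fun _ => ⟨hjk.trans, hjk.symm.trans⟩

lemma comp_mono {T : Finset ι} (h : S ⊆ T) (j : ι) : comp G S j ⊆ comp G T j := fun _ hx =>
  mem_comp.mpr ⟨h (mem_comp.mp hx).1, (mem_comp.mp hx).2.mono (restrict_mono G h)⟩

lemma reachable_restrict_comp {a b : ι} (hab : (restrict G S).Reachable a b) :
    (restrict G (comp G S a)).Reachable a b := by
  obtain ⟨p⟩ := hab
  induction p with
  | nil => rfl
  | @cons a x b hax _ ih =>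
    have hx : x ∈ comp G S a := mem_comp.mpr ⟨hax.2.2, hax.reachable⟩
    rw [comp_eq_of_mem hx] at ih
    have hax' : (restrict G (comp G S a)).Adj a x := ⟨hax.1, mem_comp_self hax.2.1, hx⟩
    exact hax'.reachable.trans ih

lemma connectedOn_comp (j : ι) : ConnectedOn G (comp G S j) := fun a ha b hb => by
  have hab := (mem_comp.mp ha).2.symm.trans (mem_comp.mp hb).2
  simpa only [comp_eq_of_mem ha] using reachable_restrict_comp hab

lemma comp_insert_of_notMem_comp {i j : ι} (hj : j ∈ S) (hji : j ∉ comp G (insert i S) i) :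
    comp G (insert i S) j = comp G S j := by
  have hij : ¬ (restrict G (insert i S)).Reachable i j :=
    fun h => hji (mem_comp.mpr ⟨mem_insert_of_mem hj, h⟩)
  refine (subset_antisymm (fun x hx => ?_) (comp_mono (subset_insert i S) j))
  obtain ⟨hxS', hjx⟩ := mem_comp.mp hx
  have hxi : x ≠ i := by rintro rfl; exact hij hjx.symm
  exact mem_comp.mpr ⟨(mem_insert.mp hxS').resolve_left hxi,
    reachable_restrict_of_reachable_restrict_insert hij hjx⟩

lemma image_comp_insert (i : ι) :
    (insert i S).image (comp G (insert i S)) =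
      insert (comp G (insert i S) i) ((S \ comp G (insert i S) i).image (comp G S)) := by
  ext D
  simp only [mem_image, mem_insert, mem_sdiff]
  constructor
  · rintro ⟨j, hj | hj, rfl⟩
    · exact .inl (by rw [hj])
    · by_cases hji : j ∈ comp G (insert i S) i
      · exact .inl (comp_eq_of_mem hji)
      · exact .inr ⟨j, ⟨hj, hji⟩, (comp_insert_of_notMem_comp hj hji).symm⟩
  · rintro (rfl | ⟨j, ⟨hj, hji⟩, rfl⟩)
    · exact ⟨i, .inl rfl, rfl⟩
    · exact ⟨j, .inr hj, comp_insert_of_notMem_comp hj hji⟩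

lemma restrictedGame_insert (v : Finset ι → ℝ) {i : ι} (hi : i ∉ S) :
    restrictedGame G v (insert i S) = v (comp G (insert i S) i) +
      ∑ D ∈ (S \ comp G (insert i S) i).image (comp G S), v D := by
  have hC : comp G (insert i S) i ∉ (S \ comp G (insert i S) i).image (comp G S) := by
    simp only [mem_image, not_exists, not_and]
    intro j _ hj
    exact hi (comp_subset j (hj ▸ mem_comp_self (mem_insert_self i S)))
  rw [restrictedGame, image_comp_insert, sum_insert hC]

lemma restrictedGame_eq_add (v : Finset ι → ℝ) {U : Finset ι} (hUS : U ⊆ S)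
    (hU : ∀ j ∈ U, comp G S j ⊆ U) :
    restrictedGame G v S =
      ∑ D ∈ U.image (comp G S), v D + ∑ D ∈ (S \ U).image (comp G S), v D := by
  have hdisj : Disjoint (U.image (comp G S)) ((S \ U).image (comp G S)) := by
    simp only [disjoint_left, mem_image, mem_sdiff, not_exists, not_and]
    rintro _ ⟨j, hj, rfl⟩ k ⟨hkS, hkU⟩ hkj
    exact hkU (hU j hj (hkj ▸ mem_comp_self hkS))
  rw [restrictedGame, ← sum_union hdisj, ← image_union, union_sdiff_of_subset hUS]

/-- All non-null players of `U` lie in a single component, and every other component consists of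
null players only. -/
lemma apply_eq_sum_image_comp {v : Finset ι → ℝ} (hv : v ∅ = 0) {U : Finset ι} (hUS : U ⊆ S)
    (hU : ∀ j ∈ U, comp G S j ⊆ U)
    (hnull : ∀ j ∈ U, ∀ k ∈ U, ¬ (restrict G S).Reachable j k →
      NullPlayer v j ∨ NullPlayer v k) :
    v U = ∑ D ∈ U.image (comp G S), v D := by
  by_cases hex : ∃ j₀ ∈ U, ¬ NullPlayer v j₀
  · obtain ⟨j₀, hj₀, hj₀null⟩ := hex
    have hout : ∀ k ∈ U, k ∉ comp G S j₀ → NullPlayer v k := fun k hk hk₀ =>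
      (hnull j₀ hj₀ k hk fun h => hk₀ (mem_comp.mpr ⟨hUS hk, h⟩)).resolve_left hj₀null
    have hother : ∀ D ∈ U.image (comp G S), D ≠ comp G S j₀ → v D = 0 := by
      rintro _ hD hD₀
      obtain ⟨k, hk, rfl⟩ := mem_image.mp hD
      refine apply_eq_zero_of_forall_nullPlayer hv fun x hx => hout x (hU k hk hx) fun hx₀ => ?_
      exact hD₀ ((comp_eq_of_mem hx).symm.trans (comp_eq_of_mem hx₀))
    calc v U = v ((U \ comp G S j₀) ∪ comp G S j₀) := by rw [sdiff_union_of_subset (hU j₀ hj₀)]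
      _ = v (comp G S j₀) := apply_union_of_forall_nullPlayer
          (fun k hk => hout k (mem_sdiff.mp hk).1 (mem_sdiff.mp hk).2) _
      _ = ∑ D ∈ U.image (comp G S), v D :=
          (sum_eq_single_of_mem _ (mem_image_of_mem _ hj₀) hother).symm
  · push Not at hex
    rw [apply_eq_zero_of_forall_nullPlayer hv hex]
    refine (sum_eq_zero fun D hD => ?_).symm
    obtain ⟨k, hk, rfl⟩ := mem_image.mp hD
    exact apply_eq_zero_of_forall_nullPlayer hv fun x hx => hex x (hU k hk hx)

end Components

lemma GraphNull.nullPlayer_restrictedGame [Fintype ι] {G : SimpleGraph ι} {v : Finset ι → ℝ}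
    {i : ι} (h : GraphNull G v i) (hvi : v {i} = 0) : NullPlayer (restrictedGame G v) i := by
  intro S hiS
  set C := comp G (insert i S) i
  have hv : v ∅ = 0 := by rw [← hvi, ← insert_empty_eq, h.1 ∅ (notMem_empty i)]
  have hUS : S ∩ C ⊆ S := inter_subset_left
  have hU : ∀ j ∈ S ∩ C, comp G S j ⊆ S ∩ C := fun j hj =>
    subset_inter (comp_subset j)
      ((comp_mono (subset_insert i S) j).trans (comp_eq_of_mem (mem_inter.mp hj).2).subset)
  have hC : insert i (S ∩ C) = C := by
    ext x
    simp only [mem_insert, mem_inter]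
    constructor
    · rintro (rfl | ⟨_, hx⟩)
      exacts [mem_comp_self (mem_insert_self x S), hx]
    · intro hx
      exact (mem_insert.mp (comp_subset i hx)).imp_right fun hxS => ⟨hxS, hx⟩
  have hnull : ∀ j ∈ S ∩ C, ∀ k ∈ S ∩ C, ¬ (restrict G S).Reachable j k →
      NullPlayer v j ∨ NullPlayer v k := by
    intro j hj k hk hjk
    obtain ⟨hjS, hjC⟩ := mem_inter.mp hj
    obtain ⟨hkS, hkC⟩ := mem_inter.mp hk
    have hCS : C.erase i ⊆ S := fun x hx =>
      (mem_insert.mp (comp_subset i (mem_of_mem_erase hx))).resolve_left (ne_of_mem_erase hx)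
    refine h.2 j k (by rintro rfl; exact hjk .rfl) (ne_of_mem_of_not_mem hjS hiS)
      (ne_of_mem_of_not_mem hkS hiS) (intermediary_of_not_reachable_erase (connectedOn_comp i)
        hjC hkC (ne_of_mem_of_not_mem hjS hiS) (ne_of_mem_of_not_mem hkS hiS) ?_)
    exact fun hr => hjk (hr.mono (restrict_mono G hCS))
  have hvC : v C = ∑ D ∈ (S ∩ C).image (comp G S), v D := by
    rw [← apply_eq_sum_image_comp hv hUS hU hnull, ← h.1 _ fun hi => hiS (hUS hi), hC]
  rw [restrictedGame_insert v hiS, hvC, restrictedGame_eq_add v hUS hU, sdiff_inter_self_left]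

end TUGame

/-- the Myerson interaction index satisfies the graph null player
property. -/
theorem MI_graphNull {ι : Type*} [Fintype ι] [DecidableEq ι]
    (G : SimpleGraph ι) (v : Finset ι → ℝ) (i : ι)
    (h : GraphNull G v i) (hvi : v {i} = 0) :
    ∀ S : Finset ι, i ∉ S → MI G v (insert i S) = 0 := fun S _ =>
  (h.nullPlayer_restrictedGame hvi).SIdiv_eq_zero (mem_insert_self i S)
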